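/- arXiv:1305.3496 — 8 statements merged into one kernel-verified Lean document; each statement's English description precedes it below -/
import Mathlib

section
/- Let λ₁, λ₂, μ₁, μ₂ > 0 with λ₁/μ₁ + λ₂/μ₂ < 1 and μ₁ ≠ μ₂. Then the quadratic polynomial P(s) = s² + (μ₁+μ₂−λ₁−λ₂)s + μ₁μ₂(1 − λ₁/μ₁ − λ₂/μ₂) has two distinct real roots, both of which are negative. -/
theorem stmt_0 (l1 l2 m1 m2 : ℝ) (hl1 : 0 < l1) (hl2 : 0 < l2)
    (hm1 : 0 < m1) (hm2 : 0 < m2) (hstab : l1 / m1 + l2 / m2 < 1) (hne : m1 ≠ m2) :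
    ∃ r1 r2 : ℝ, r1 ≠ r2 ∧ r1 < 0 ∧ r2 < 0 ∧
      r1 ^ 2 + (m1 + m2 - l1 - l2) * r1 + m1 * m2 * (1 - l1 / m1 - l2 / m2) = 0 ∧
      r2 ^ 2 + (m1 + m2 - l1 - l2) * r2 + m1 * m2 * (1 - l1 / m1 - l2 / m2) = 0 := by
  set b : ℝ := m1 + m2 - l1 - l2 with hb
  have hc : m1 * m2 * (1 - l1 / m1 - l2 / m2) = m1 * m2 - l1 * m2 - l2 * m1 := by
    field_simp
  have hcpos : 0 < m1 * m2 - l1 * m2 - l2 * m1 := by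
    have h : l1 / m1 + l2 / m2 = (l1 * m2 + l2 * m1) / (m1 * m2) := by
      field_simp
    have := (div_lt_one (mul_pos hm1 hm2)).mp (h ▸ hstab)
    linarith
  have hl1m : l1 < m1 := by nlinarith [mul_pos hl2 hm1]
  have hl2m : l2 < m2 := by nlinarith [mul_pos hl1 hm2]
  have hbpos : 0 < b := by simp only [hb]; linarith
  set D : ℝ := b ^ 2 - 4 * (m1 * m2 - l1 * m2 - l2 * m1) with hD
  have hDpos : 0 < D := by
    have : D = (m1 - m2 - l1 + l2) ^ 2 + 4 * (l1 * l2) := by simp only [hD, hb]; ring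
    nlinarith [sq_nonneg (m1 - m2 - l1 + l2), mul_pos hl1 hl2]
  set s : ℝ := Real.sqrt D with hs
  have hspos : 0 < s := Real.sqrt_pos.mpr hDpos
  have hssq : s ^ 2 = D := Real.sq_sqrt hDpos.le
  have hsb : s < b := by
    have : s ^ 2 < b ^ 2 := by rw [hssq]; simp only [hD]; linarith
    nlinarith
  refine ⟨(-b - s) / 2, (-b + s) / 2, ?_, ?_, ?_, ?_, ?_⟩
  · intro h
    have h2 : -b - s = -b + s := by
      have := congrArg (· * 2) h
      simpa [div_mul_cancel₀] using this
    nlinarith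
  · exact div_neg_of_neg_of_pos (by nlinarith) two_pos
  · exact div_neg_of_neg_of_pos (by nlinarith) two_pos
  · rw [hc]
    have h4 : ((-b - s) / 2) ^ 2 + b * ((-b - s) / 2) + (m1 * m2 - l1 * m2 - l2 * m1)
        = (s ^ 2 - D) / 4 := by simp only [hD]; ring
    rw [h4, hssq]; simp
  · rw [hc]
    have h4 : ((-b + s) / 2) ^ 2 + b * ((-b + s) / 2) + (m1 * m2 - l1 * m2 - l2 * m1)
        = (s ^ 2 - D) / 4 := by simp only [hD]; ring
    rw [h4, hssq]; simp
end

section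
/- Let λ₁, λ₂, μ₁, μ₂ > 0, λ = λ₁+λ₂, and define T₁(s₁) = −μ₂ s₁(s₁+μ₁−λ₁)/(s₁² − (λ−μ₁)s₁ − λ₂μ₁). Then for any s₁ in the domain of T₁ (denominator nonzero), the pair (s₁, T₁(s₁)) satisfies K₁(s₁, T₁(s₁)) = 0, where K₁(s₁,s₂) = s₁ − λ₁s₁/(s₁+μ₁) − λ₂s₂/(s₂+μ₂), provided also s₁ ≠ −μ₁ and T₁(s₁) ≠ −μ₂. -/
theorem stmt_3 (l1 l2 m1 m2 : ℝ) (hl1 : 0 < l1) (hl2 : 0 < l2)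
    (hm1 : 0 < m1) (hm2 : 0 < m2) (s1 : ℝ)
    (hden : s1 ^ 2 - (l1 + l2 - m1) * s1 - l2 * m1 ≠ 0)
    (hT : -m2 * s1 * (s1 + m1 - l1) / (s1 ^ 2 - (l1 + l2 - m1) * s1 - l2 * m1) ≠ -m2)
    (hs1 : s1 ≠ -m1) :
    s1 - l1 * s1 / (s1 + m1) -
      l2 * (-m2 * s1 * (s1 + m1 - l1) / (s1 ^ 2 - (l1 + l2 - m1) * s1 - l2 * m1)) /
        (-m2 * s1 * (s1 + m1 - l1) / (s1 ^ 2 - (l1 + l2 - m1) * s1 - l2 * m1) + m2) = 0 := by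
  have h1 : s1 + m1 ≠ 0 := by
    intro h; exact hs1 (by linarith)
  set D := s1 ^ 2 - (l1 + l2 - m1) * s1 - l2 * m1 with hD
  have key : -m2 * s1 * (s1 + m1 - l1) / D + m2 = -m2 * l2 * (s1 + m1) / D := by
    field_simp
    ring
  rw [key]
  have h2 : -m2 * l2 * (s1 + m1) / D ≠ 0 := by
    apply div_ne_zero _ hden
    intro h
    rcases mul_eq_zero.mp h with h' | h'
    · rcases mul_eq_zero.mp h' with h'' | h''
      · exact hm2.ne' (by linarith)
      · exact hl2.ne' h''
    · exact h1 h'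
  rw [mul_div_assoc', div_div_div_eq]
  have h4 : -m2 * l2 * (s1 + m1) ≠ 0 := by
    intro h
    rcases mul_eq_zero.mp h with h' | h'
    · rcases mul_eq_zero.mp h' with h'' | h''
      · exact hm2.ne' (by linarith)
      · exact hl2.ne' h''
    · exact h1 h'
  rw [mul_comm D (-m2 * l2 * (s1 + m1))]
  rw [mul_div_mul_right _ _ hden]
  field_simp
  ring
end

section
/- Let λ₁, λ₂, μ₁, μ₂ > 0 with λ₁ < μ₁, and let R₁(w,z) be as defined. For every real z > 0: R₁(−z,z) = 2λ₂μ₁z > 0 and R₁(z,z) = −2μ₂z(2z−λ₁+μ₁) < 0; consequently R₁(·,z) has three distinct real roots α₁(z) < −z < β₁(z) < z < γ₁(z). -/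
lemma cubic_aux (x S M : ℝ) (hb : |x| ≤ S * M ^ 2) (hMS : S + 1 ≤ M) (h1 : 1 ≤ M) :
    0 < M ^ 3 + x := by
  have h2 := (abs_le.mp hb).1
  nlinarith [mul_nonneg (sq_nonneg M) (show (0:ℝ) ≤ M - S - 1 by linarith)]

theorem stmt_8 (l1 l2 m1 m2 : ℝ) (hl1 : 0 < l1) (hl2 : 0 < l2)
    (hm1 : 0 < m1) (hm2 : 0 < m2) (hload : l1 < m1) (hstab : l1 / m1 + l2 / m2 < 1) :
    let l : ℝ := l1 + l2
    let P : ℝ → ℝ := fun z => z ^ 2 + (m1 + m2 - l) * z + m1 * m2 * (1 - (l1 / m1 + l2 / m2))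
    let R1 : ℝ → ℝ → ℝ := fun w z =>
      w ^ 3 - (l - m1 + m2 - z) * w ^ 2 + (l1 * m2 - l2 * m1 - m1 * m2 - 2 * m2 * z - z ^ 2) * w
        - z * P z
    ∀ z : ℝ, 0 < z →
      (R1 (-z) z = 2 * l2 * m1 * z ∧ 0 < R1 (-z) z) ∧
      (R1 z z = -2 * m2 * z * (2 * z - l1 + m1) ∧ R1 z z < 0) ∧
      ∃ a b c : ℝ, a < -z ∧ -z < b ∧ b < z ∧ z < c ∧
        R1 a z = 0 ∧ R1 b z = 0 ∧ R1 c z = 0 := by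
  intro l P R1 z hz
  have hm1' : m1 ≠ 0 := ne_of_gt hm1
  have hm2' : m2 ≠ 0 := ne_of_gt hm2
  have hP : m1 * m2 * (1 - (l1 / m1 + l2 / m2)) = m1 * m2 - l1 * m2 - l2 * m1 := by
    field_simp; ring
  have h1 : R1 (-z) z = 2 * l2 * m1 * z := by
    simp only [R1, P, l, hP]; ring
  have h2 : R1 z z = -2 * m2 * z * (2 * z - l1 + m1) := by
    simp only [R1, P, l, hP]; ring
  have hpos : 0 < R1 (-z) z := by rw [h1]; positivity
  have hneg : R1 z z < 0 := by
    rw [h2]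
    have h3 : 0 < 2 * z - l1 + m1 := by linarith
    have := mul_pos (mul_pos (by linarith : (0:ℝ) < 2 * m2) hz) h3
    linarith
  refine ⟨⟨h1, hpos⟩, ⟨h2, hneg⟩, ?_⟩
  have hcont : Continuous fun w => R1 w z := by
    simp only [R1]; fun_prop
  obtain ⟨A, B, C, hf⟩ : ∃ A B C : ℝ, ∀ w, R1 w z = w ^ 3 + A * w ^ 2 + B * w + C :=
    ⟨-(l - m1 + m2 - z), l1 * m2 - l2 * m1 - m1 * m2 - 2 * m2 * z - z ^ 2, -(z * P z),
      fun w => by simp only [R1]; ring⟩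
  set S : ℝ := |A| + |B| + |C| with hS
  have hS0 : 0 ≤ S := by positivity
  set M : ℝ := 1 + S + z with hM
  have hM1 : 1 ≤ M := by linarith
  have hMz : z < M := by linarith
  have hMS : S + 1 ≤ M := by linarith
  have hbound : ∀ w, 1 ≤ |w| → |A * w ^ 2 + B * w + C| ≤ S * w ^ 2 := by
    intro w hw
    have hw2 : 1 ≤ w ^ 2 := by nlinarith [sq_abs w, abs_nonneg w]
    have hw1 : |w| ≤ w ^ 2 := by nlinarith [sq_abs w, abs_nonneg w]
    have e1 : |B| * |w| ≤ |B| * w ^ 2 := mul_le_mul_of_nonneg_left hw1 (abs_nonneg B)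
    have e2 : |C| * 1 ≤ |C| * w ^ 2 := mul_le_mul_of_nonneg_left hw2 (abs_nonneg C)
    calc |A * w ^ 2 + B * w + C| ≤ |A * w ^ 2| + |B * w| + |C| :=
          (abs_add_le _ _).trans (by gcongr; exact abs_add_le _ _)
      _ = |A| * w ^ 2 + |B| * |w| + |C| := by
          rw [abs_mul, abs_mul, abs_of_nonneg (sq_nonneg w)]
      _ ≤ S * w ^ 2 := by rw [hS]; nlinarith
  have hMabs : 1 ≤ |M| := by rw [abs_of_pos (by linarith)]; exact hM1
  have hMneg : R1 (-M) z < 0 := by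
    rw [hf]
    have hb : |-(A * M ^ 2) + B * M - C| ≤ S * M ^ 2 := by
      have := hbound (-M) (by rwa [abs_neg])
      rw [show A * (-M) ^ 2 + B * (-M) + C = -(-(A * M ^ 2) + B * M - C) by ring, abs_neg] at this
      nlinarith [this]
    have h5 := cubic_aux _ S M hb hMS hM1
    have hg : (-M) ^ 3 + A * (-M) ^ 2 + B * (-M) + C
        = -(M ^ 3 + (-(A * M ^ 2) + B * M - C)) := by ring
    rw [hg]; linarith
  have hMpos : 0 < R1 M z := by
    rw [hf]
    have h5 := cubic_aux (A * M ^ 2 + B * M + C) S M (hbound M hMabs) hMS hM1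
    linarith
  obtain ⟨a, ha, hfa⟩ := intermediate_value_Ioo (by linarith : -M ≤ -z)
    (hcont.continuousOn) (show (0:ℝ) ∈ Set.Ioo (R1 (-M) z) (R1 (-z) z) from ⟨hMneg, hpos⟩)
  obtain ⟨b, hb, hfb⟩ := intermediate_value_Ioo' (by linarith : -z ≤ z)
    (hcont.continuousOn) (show (0:ℝ) ∈ Set.Ioo (R1 z z) (R1 (-z) z) from ⟨hneg, hpos⟩)
  obtain ⟨c, hc, hfc⟩ := intermediate_value_Ioo (by linarith : z ≤ M)
    (hcont.continuousOn) (show (0:ℝ) ∈ Set.Ioo (R1 z z) (R1 M z) from ⟨hneg, hMpos⟩)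
  exact ⟨a, b, c, ha.2, hb.1, hb.2, hc.1, hfa, hfb, hfc⟩
end

section
/- Let λ₁, λ₂, μ₁, μ₂ > 0 with λ₂ < μ₂, and R₂(w,z) as defined. For every real z > 0: R₂(−z,z) = 2μ₁z(2z−λ₂+μ₂) > 0 and R₂(z,z) = −2λ₁μ₂z < 0; consequently R₂(·,z) has three distinct real roots α₂(z) < −z < β₂(z) < z < γ₂(z). -/
private lemma cubic_pos (A B C M : ℝ) (hM : 1 + |A| + |B| + |C| ≤ M) :
    0 < M ^ 3 + A * M ^ 2 + B * M + C := by
  have hA := abs_nonneg A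
  have hB := abs_nonneg B
  have hC := abs_nonneg C
  have hM1 : 1 ≤ M := by linarith
  nlinarith [mul_nonneg (by linarith : (0:ℝ) ≤ M - 1 - |A| - |B| - |C|) (sq_nonneg M),
    mul_nonneg hB (by nlinarith : (0:ℝ) ≤ M ^ 2 - M),
    mul_nonneg hC (by nlinarith : (0:ℝ) ≤ M ^ 2 - 1),
    mul_nonneg (by linarith [neg_abs_le A] : (0:ℝ) ≤ |A| + A) (sq_nonneg M),
    mul_nonneg (by linarith [neg_abs_le B] : (0:ℝ) ≤ |B| + B) (by linarith : (0:ℝ) ≤ M),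
    neg_abs_le C, sq_nonneg M]

private lemma ivt_root (f : ℝ → ℝ) (hf : Continuous f) {x y : ℝ} (hxy : x < y)
    (hx : f x < 0) (hy : 0 < f y) : ∃ t, x < t ∧ t < y ∧ f t = 0 := by
  have h := intermediate_value_Ioo hxy.le hf.continuousOn
  obtain ⟨t, ht, hft⟩ := h ⟨hx, hy⟩
  exact ⟨t, ht.1, ht.2, hft⟩

private lemma ivt_root' (f : ℝ → ℝ) (hf : Continuous f) {x y : ℝ} (hxy : x < y)
    (hx : 0 < f x) (hy : f y < 0) : ∃ t, x < t ∧ t < y ∧ f t = 0 := by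
  have h := intermediate_value_Ioo' hxy.le hf.continuousOn
  obtain ⟨t, ht, hft⟩ := h ⟨hy, hx⟩
  exact ⟨t, ht.1, ht.2, hft⟩

theorem stmt_9 (l1 l2 m1 m2 : ℝ) (hl1 : 0 < l1) (hl2 : 0 < l2)
    (hm1 : 0 < m1) (hm2 : 0 < m2) (hload : l2 < m2) (hstab : l1 / m1 + l2 / m2 < 1) :
    let l : ℝ := l1 + l2
    let P : ℝ → ℝ := fun z => z ^ 2 + (m1 + m2 - l) * z + m1 * m2 * (1 - (l1 / m1 + l2 / m2))
    let R2 : ℝ → ℝ → ℝ := fun w z =>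
      w ^ 3 + (l + m1 - m2 - z) * w ^ 2 + (l2 * m1 - l1 * m2 - m1 * m2 - 2 * m1 * z - z ^ 2) * w
        + z * P z
    ∀ z : ℝ, 0 < z →
      (R2 (-z) z = 2 * m1 * z * (2 * z - l2 + m2) ∧ 0 < R2 (-z) z) ∧
      (R2 z z = -2 * l1 * m2 * z ∧ R2 z z < 0) ∧
      ∃ a b c : ℝ, a < -z ∧ -z < b ∧ b < z ∧ z < c ∧
        R2 a z = 0 ∧ R2 b z = 0 ∧ R2 c z = 0 := by
  intro l P R2 z hz
  have hm1' : m1 ≠ 0 := hm1.ne'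
  have hm2' : m2 ≠ 0 := hm2.ne'
  have hneg : R2 (-z) z = 2 * m1 * z * (2 * z - l2 + m2) := by
    simp only [R2, P, l]
    field_simp
    ring
  have hpos : R2 z z = -2 * l1 * m2 * z := by
    simp only [R2, P, l]
    field_simp
    ring
  have hnegpos : 0 < R2 (-z) z := by
    rw [hneg]
    nlinarith [mul_pos (mul_pos hm1 hz) (show (0:ℝ) < 2 * z - l2 + m2 by linarith)]
  have hposneg : R2 z z < 0 := by
    rw [hpos]
    nlinarith [mul_pos (mul_pos hl1 hm2) hz]
  refine ⟨⟨hneg, hnegpos⟩, ⟨hpos, hposneg⟩, ?_⟩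
  have hg : ∀ w, R2 w z = w ^ 3 + (l + m1 - m2 - z) * w ^ 2
      + (l2 * m1 - l1 * m2 - m1 * m2 - 2 * m1 * z - z ^ 2) * w + z * P z := fun w => rfl
  obtain ⟨A, hA⟩ : ∃ A : ℝ, A = l + m1 - m2 - z := ⟨_, rfl⟩
  obtain ⟨B, hB⟩ : ∃ B : ℝ, B = l2 * m1 - l1 * m2 - m1 * m2 - 2 * m1 * z - z ^ 2 := ⟨_, rfl⟩
  obtain ⟨C, hC⟩ : ∃ C : ℝ, C = z * P z := ⟨_, rfl⟩
  have hf : ∀ w, R2 w z = w ^ 3 + A * w ^ 2 + B * w + C := by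
    intro w; rw [hA, hB, hC]
  set M := 1 + z + |A| + |B| + |C| with hM
  have hMz : z < M := by
    have := abs_nonneg A; have := abs_nonneg B; have := abs_nonneg C; linarith
  have hMbig : 1 + |A| + |B| + |C| ≤ M := by linarith
  have hfM : 0 < R2 M z := by rw [hf]; exact cubic_pos A B C M hMbig
  have hfM' : R2 (-M) z < 0 := by
    rw [hf]
    have h := cubic_pos (-A) B (-C) M (by simpa using hMbig)
    nlinarith [h]
  have hcont : Continuous (fun w => R2 w z) := by
    have : (fun w => R2 w z) = fun w => w ^ 3 + A * w ^ 2 + B * w + C := funext hf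
    rw [this]; fun_prop
  obtain ⟨a, ha1, ha2, ha3⟩ := ivt_root (fun w => R2 w z) hcont (by linarith : -M < -z) hfM' hnegpos
  obtain ⟨b, hb1, hb2, hb3⟩ := ivt_root' (fun w => R2 w z) hcont (by linarith : -z < z) hnegpos hposneg
  obtain ⟨c, hc1, hc2, hc3⟩ := ivt_root (fun w => R2 w z) hcont hMz hposneg hfM
  exact ⟨a, b, c, ha2, hb1, hb2, hc1, ha3, hb3, hc3⟩
end

section
/- Let λ₁, λ₂, μ₁, μ₂ > 0, λ = λ₁+λ₂, and T₁(s) = −μ₂ s(s+μ₁−λ₁)/(s² − (λ−μ₁)s − λ₂μ₁). If a and b are two points with a ≠ b, both in the domain of T₁, satisfying T₁(a) = T₁(b), a ≠ −μ₁ and b ≠ −μ₁, then b = −μ₁(a + μ₁ − λ₁)/(a + μ₁). -/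
theorem stmt_10 (l1 l2 m1 m2 : ℝ) (hl1 : 0 < l1) (hl2 : 0 < l2)
    (hm1 : 0 < m1) (hm2 : 0 < m2) (a b : ℝ) (hab : a ≠ b)
    (hda : a ^ 2 - (l1 + l2 - m1) * a - l2 * m1 ≠ 0)
    (hdb : b ^ 2 - (l1 + l2 - m1) * b - l2 * m1 ≠ 0)
    (hT : -m2 * a * (a + m1 - l1) / (a ^ 2 - (l1 + l2 - m1) * a - l2 * m1)
        = -m2 * b * (b + m1 - l1) / (b ^ 2 - (l1 + l2 - m1) * b - l2 * m1))
    (ha : a ≠ -m1) (hb : b ≠ -m1) :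
    b = -m1 * (a + m1 - l1) / (a + m1) := by
  have h1 : (-m2 * a * (a + m1 - l1)) * (b ^ 2 - (l1 + l2 - m1) * b - l2 * m1)
      = (-m2 * b * (b + m1 - l1)) * (a ^ 2 - (l1 + l2 - m1) * a - l2 * m1) :=
    (div_eq_div_iff hda hdb).mp hT
  have h2 : m2 * l2 * ((a - b) * (a * b + m1 * a + m1 * b + m1 ^ 2 - l1 * m1)) = 0 := by
    linear_combination h1
  have h3 : a * b + m1 * a + m1 * b + m1 ^ 2 - l1 * m1 = 0 := by
    rcases mul_eq_zero.mp h2 with h | h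
    · exact absurd h (by positivity)
    · rcases mul_eq_zero.mp h with h | h
      · exact absurd (sub_eq_zero.mp h) hab
      · exact h
  have ham : a + m1 ≠ 0 := fun h => ha (by linarith)
  field_simp
  linear_combination h3
end

section
/- Let λ₁, λ₂, μ₁, μ₂ > 0, λ = λ₁+λ₂. The resultant (with respect to w) of the cubics R₁(w,z) and R₂(w,z) equals 8λ₁λ₂μ₁μ₂ · z · P(z) · (2z+μ₁+μ₂)², where P(z) = z² + (μ₁+μ₂−λ)z + μ₁μ₂(1−ϱ) and ϱ = λ₁/μ₁+λ₂/μ₂. -/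
/-- The resultant of two monic cubics, expressed as the determinant of their
Sylvester matrix. -/
noncomputable def sylvesterRes3 (p2 p1 p0 q2 q1 q0 : ℝ) : ℝ :=
  Matrix.det !![1, p2, p1, p0, 0, 0;
                0, 1, p2, p1, p0, 0;
                0, 0, 1, p2, p1, p0;
                1, q2, q1, q0, 0, 0;
                0, 1, q2, q1, q0, 0;
                0, 0, 1, q2, q1, q0]


/-! The resultant of two monic cubics is, up to sign, the determinant of their 3 × 3 Bezoutian,
whose entries are the brackets `p i * q j - p j * q i`. Once the constant term of `P` is cleared of
its denominators, the claim is a polynomial identity between that determinant and the product. -/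

theorem sylvesterRes3_eq_neg_det_bezoutian (p2 p1 p0 q2 q1 q0 : ℝ) :
    sylvesterRes3 p2 p1 p0 q2 q1 q0 =
      -Matrix.det !![p1 * q0 - p0 * q1, p2 * q0 - p0 * q2, q0 - p0;
                    p2 * q0 - p0 * q2, q0 - p0 + (p2 * q1 - p1 * q2), q1 - p1;
                    q0 - p0, q1 - p1, q2 - p2] := by
  simp [sylvesterRes3, Matrix.det_succ_row_zero, Fin.sum_univ_succ, Fin.succAbove]
  ring

theorem mul_mul_one_sub_div_add_div {l1 l2 m1 m2 : ℝ} (hm1 : m1 ≠ 0) (hm2 : m2 ≠ 0) :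
    m1 * m2 * (1 - (l1 / m1 + l2 / m2)) = m1 * m2 - l1 * m2 - l2 * m1 := by
  field_simp
  ring

theorem stmt_14_general (l1 l2 m1 m2 : ℝ)
    (hm1 : 0 < m1) (hm2 : 0 < m2) :
    let l : ℝ := l1 + l2
    let P : ℝ → ℝ := fun z => z ^ 2 + (m1 + m2 - l) * z + m1 * m2 * (1 - (l1 / m1 + l2 / m2))
    ∀ z : ℝ,
      sylvesterRes3 (-(l - m1 + m2 - z)) (l1 * m2 - l2 * m1 - m1 * m2 - 2 * m2 * z - z ^ 2)
          (-(z * P z))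
        (l + m1 - m2 - z) (l2 * m1 - l1 * m2 - m1 * m2 - 2 * m1 * z - z ^ 2) (z * P z)
      = 8 * l1 * l2 * m1 * m2 * z * P z * (2 * z + m1 + m2) ^ 2 := by
  intro l P z
  simp only [P, l, mul_mul_one_sub_div_add_div hm1.ne' hm2.ne']
  rw [sylvesterRes3_eq_neg_det_bezoutian, Matrix.det_fin_three]
  simp only [Matrix.of_apply, Matrix.cons_val', Matrix.cons_val_zero, Matrix.cons_val_fin_one,
    Matrix.cons_val_one, Matrix.cons_val]
  ring

theorem stmt_14 (l1 l2 m1 m2 : ℝ) (hl1 : 0 < l1) (hl2 : 0 < l2)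
    (hm1 : 0 < m1) (hm2 : 0 < m2) :
    let l : ℝ := l1 + l2
    let P : ℝ → ℝ := fun z => z ^ 2 + (m1 + m2 - l) * z + m1 * m2 * (1 - (l1 / m1 + l2 / m2))
    ∀ z : ℝ,
      sylvesterRes3 (-(l - m1 + m2 - z)) (l1 * m2 - l2 * m1 - m1 * m2 - 2 * m2 * z - z ^ 2)
          (-(z * P z))
        (l + m1 - m2 - z) (l2 * m1 - l1 * m2 - m1 * m2 - 2 * m1 * z - z ^ 2) (z * P z)
      = 8 * l1 * l2 * m1 * m2 * z * P z * (2 * z + m1 + m2) ^ 2 :=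
  stmt_14_general l1 l2 m1 m2 hm1 hm2
end

section
/- Let λ₁, λ₂, μ₁, μ₂ > 0. The leading coefficient (of z⁴) of the discriminant Δ₁(z) of the cubic R₁(w,z) with respect to w equals 16[(μ₁−λ₁)² + λ₂² + 2λ₂(λ₁+μ₁)], which is strictly positive; in particular Δ₁(z) is a polynomial in z of degree exactly 4. -/
set_option maxHeartbeats 2000000

theorem stmt_15 (l1 l2 m1 m2 : ℝ) (hl1 : 0 < l1) (hl2 : 0 < l2)
    (hm1 : 0 < m1) (hm2 : 0 < m2) :
    let l : ℝ := l1 + l2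
    let P : ℝ → ℝ := fun z => z ^ 2 + (m1 + m2 - l) * z + m1 * m2 * (1 - (l1 / m1 + l2 / m2))
    let R11 : ℝ → ℝ := fun z => -(l - m1 + m2 - z)
    let R12 : ℝ → ℝ := fun z => l1 * m2 - l2 * m1 - m1 * m2 - 2 * m2 * z - z ^ 2
    let R13 : ℝ → ℝ := fun z => -(z * P z)
    let p : ℝ → ℝ := fun z => R12 z - (R11 z) ^ 2 / 3
    let q : ℝ → ℝ := fun z => R13 z - R11 z * R12 z / 3 + 2 * (R11 z) ^ 3 / 27
    let Δ1 : ℝ → ℝ := fun z => -(4 * (p z) ^ 3 + 27 * (q z) ^ 2)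
    ∃ c3 c2 c1 c0 : ℝ,
      (∀ z : ℝ, Δ1 z = 16 * ((m1 - l1) ^ 2 + l2 ^ 2 + 2 * l2 * (l1 + m1)) * z ^ 4
          + c3 * z ^ 3 + c2 * z ^ 2 + c1 * z + c0) ∧
      0 < 16 * ((m1 - l1) ^ 2 + l2 ^ 2 + 2 * l2 * (l1 + m1)) := by
  intro l P R11 R12 R13 p q Δ1
  set A : ℝ := 16 * ((m1 - l1) ^ 2 + l2 ^ 2 + 2 * l2 * (l1 + m1)) with hA
  set c0 : ℝ := Δ1 0 with hc0
  set a : ℝ := Δ1 1 - A - c0 with ha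
  set b : ℝ := Δ1 (-1) - A - c0 with hb
  set d : ℝ := Δ1 2 - 16 * A - c0 with hd
  set e : ℝ := Δ1 (-2) - 16 * A - c0 with he
  refine ⟨(d - e - 2 * a + 2 * b) / 12, (a + b) / 2,
    (a - b) / 2 - (d - e - 2 * a + 2 * b) / 12, c0, ?_, ?_⟩
  · intro z
    have key : m1 * m2 * (1 - (l1 / m1 + l2 / m2)) = m1 * m2 - l1 * m2 - l2 * m1 := by
      field_simp; ring
    simp only [hA, ha, hb, hd, he, hc0, Δ1, p, q, R11, R12, R13, P, l, key]
    ring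
  · have h1 : (0:ℝ) ≤ (m1 - l1) ^ 2 := sq_nonneg _
    have h2 : (0:ℝ) < l2 ^ 2 := by positivity
    have h3 : (0:ℝ) < 2 * l2 * (l1 + m1) := by positivity
    simp only [hA]; nlinarith
end

section
/- Let λ₁, λ₂, μ₁ > 0 with λ₁ < μ₁. The cubic C₁(s) = s³ + 3μ₁s² + 3μ₁(μ₁−λ₁)s + μ₁((μ₁−λ₁)² + λ₁λ₂) has discriminant −27λ₁²μ₁²((μ₁−λ₁)² + λ₂² + 2λ₂(λ₁+μ₁)), which is strictly negative; hence C₁ has exactly one real root. -/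
theorem stmt_17 (l1 l2 m1 : ℝ) (hl1 : 0 < l1) (hl2 : 0 < l2)
    (hm1 : 0 < m1) (hload : l1 < m1) :
    let a : ℝ := 3 * m1
    let b : ℝ := 3 * m1 * (m1 - l1)
    let c : ℝ := m1 * ((m1 - l1) ^ 2 + l1 * l2)
    let disc : ℝ := 18 * a * b * c - 4 * a ^ 3 * c + a ^ 2 * b ^ 2 - 4 * b ^ 3 - 27 * c ^ 2
    disc = -27 * l1 ^ 2 * m1 ^ 2 * ((m1 - l1) ^ 2 + l2 ^ 2 + 2 * l2 * (l1 + m1)) ∧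
    disc < 0 ∧
    ∃! s : ℝ, s ^ 3 + a * s ^ 2 + b * s + c = 0 := by
  intro a b c disc
  have ha : a = 3 * m1 := rfl
  have hb : b = 3 * m1 * (m1 - l1) := rfl
  have hc : c = m1 * ((m1 - l1) ^ 2 + l1 * l2) := rfl
  have heq : disc = -27 * l1 ^ 2 * m1 ^ 2 * ((m1 - l1) ^ 2 + l2 ^ 2 + 2 * l2 * (l1 + m1)) := by
    show (18 * a * b * c - 4 * a ^ 3 * c + a ^ 2 * b ^ 2 - 4 * b ^ 3 - 27 * c ^ 2 : ℝ) = _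
    rw [ha, hb, hc]; ring
  have hpos : 0 < (m1 - l1) ^ 2 + l2 ^ 2 + 2 * l2 * (l1 + m1) := by positivity
  have hdisc : disc < 0 := by
    rw [heq]
    have h27 : 0 < 27 * l1 ^ 2 * m1 ^ 2 * ((m1 - l1) ^ 2 + l2 ^ 2 + 2 * l2 * (l1 + m1)) := by
      positivity
    linarith
  refine ⟨heq, hdisc, ?_⟩
  -- existence
  have ha' : 0 < a := by rw [ha]; linarith
  have hb' : 0 < b := by rw [hb]; nlinarith
  have hc' : 0 < c := by rw [hc]; nlinarith [sq_nonneg (m1 - l1), mul_pos hl1 hl2]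
  set x : ℝ := 1 + a + b + c with hx
  have hx1 : 1 ≤ x := by linarith
  have hneg : (-x) ^ 3 + a * (-x) ^ 2 + b * (-x) + c ≤ 0 := by
    have h1 : a * x ^ 2 + c ≤ x ^ 3 := by nlinarith [sq_nonneg x, mul_pos hb' hc']
    nlinarith [mul_pos hb' (lt_of_lt_of_le one_pos hx1)]
  have hcont : Continuous fun s : ℝ => s ^ 3 + a * s ^ 2 + b * s + c := by continuity
  have hmem : (0 : ℝ) ∈ Set.Icc ((-x) ^ 3 + a * (-x) ^ 2 + b * (-x) + c)
      ((0:ℝ) ^ 3 + a * (0:ℝ) ^ 2 + b * (0:ℝ) + c) := by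
    constructor
    · exact hneg
    · simp; positivity
  have hivt := intermediate_value_Icc (by linarith : (-x : ℝ) ≤ 0) hcont.continuousOn
  obtain ⟨s, _, hs⟩ := hivt hmem
  simp only at hs
  refine ⟨s, hs, ?_⟩
  intro t ht
  by_contra hne
  -- two distinct roots force disc ≥ 0
  have hdiff : (t - s) * (t ^ 2 + t * s + s ^ 2 + a * (t + s) + b) = 0 := by
    linear_combination ht - hs
  have hts : t - s ≠ 0 := sub_ne_zero.mpr hne
  have hbq : b = -(t ^ 2 + t * s + s ^ 2) - a * (t + s) := by
    have h2 : t ^ 2 + t * s + s ^ 2 + a * (t + s) + b = 0 :=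
      (mul_eq_zero.mp hdiff).resolve_left hts
    linarith
  have hcq : c = -s ^ 3 - a * s ^ 2 - b * s := by linarith [hs]
  have : disc = ((s - t) * (s - (-a - s - t)) * (t - (-a - s - t))) ^ 2 := by
    show (18 * a * b * c - 4 * a ^ 3 * c + a ^ 2 * b ^ 2 - 4 * b ^ 3 - 27 * c ^ 2 : ℝ) = _
    rw [hcq, hbq]; ring
  have hsq := sq_nonneg ((s - t) * (s - (-a - s - t)) * (t - (-a - s - t)))
  rw [← this] at hsq
  linarith
end
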